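/- Let X, Y be elements of the monoid M of block matrices [[1_k, B],[0, T]] (T diagonal) such that the diagonal idempotents E_X = XX⁻¹ and E_Y = YY⁻¹ (commuting inverses) have the same support (i.e. the sets of indices i with T_X(i,i) ≠ 0 and T_Y(i,i) ≠ 0 coincide). If there exist Z, W in the group H of units of E := the common diagonal idempotent block such that X·E = Z·W and Y·E = W·Z, then there exist Z', W' ∈ M with X = Z'·W' and Y = W'·Z'. Specifically Z' = Z·(YY⁻¹) and W' = W·(XX⁻¹) work. -/

import Mathlib

/-!
Write `U(B, T)` for `[[1, B], [0, T]]`, so that `U(B, T) U(B', T') = U(B' + B T', T T')`.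
Right multiplication by `E` forgets the part `B_X (1 - D)` of `X`; multiplying `W` by `XX⁻¹`
restores it, while the term `B_Y (1 - D) T_W` brought in by `YY⁻¹` vanishes because `T_W` is
supported on `D`. The second identity is the first with `(X, Z)` and `(Y, W)` exchanged.
-/

namespace Matrix

variable {n m R : Type*} [Fintype n] [Fintype m]

theorem fromBlocks_one_zero_mul [DecidableEq n] [Semiring R] (B B' : Matrix n m R)
    (T T' : Matrix m m R) :
    (fromBlocks 1 B 0 T * fromBlocks 1 B' 0 T' : Matrix (n ⊕ m) (n ⊕ m) R) =
      fromBlocks 1 (B' + B * T') 0 (T * T') := by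
  simp [fromBlocks_multiply]

theorem diagonal_mul_diagonal_of_support [DecidableEq m] [Semiring R] {d s : m → R}
    (hd : ∀ i, d i = 0 ∨ d i = 1) (hs : ∀ i, d i = 0 → s i = 0) :
    diagonal s * diagonal d = diagonal s ∧ diagonal d * diagonal s = diagonal s := by
  simp only [diagonal_mul_diagonal, diagonal_eq_diagonal_iff, ← forall_and]
  intro i
  rcases hd i with h | h <;> simp [h, hs i]

theorem fromBlocks_lift_factorization [DecidableEq n] [DecidableEq m] [Ring R]
    (BX BY BZ BW : Matrix n m R) (D tX sZ sW : Matrix m m R)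
    (hBZ : BZ * D = BZ) (hBW : BW * D = BW) (hsZ : sZ * D = sZ) (hsW : sW * D = sW)
    (hDsW : D * sW = sW) (htX : tX * D = tX)
    (hXE : (fromBlocks 1 BX 0 tX * fromBlocks 1 0 0 D : Matrix (n ⊕ m) (n ⊕ m) R) =
      fromBlocks 1 BZ 0 sZ * fromBlocks 1 BW 0 sW) :
    (fromBlocks 1 BZ 0 sZ * fromBlocks 1 (BY * (1 - D)) 0 D *
      (fromBlocks 1 BW 0 sW * fromBlocks 1 (BX * (1 - D)) 0 D) : Matrix (n ⊕ m) (n ⊕ m) R) =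
      fromBlocks 1 BX 0 tX := by
  simp only [fromBlocks_one_zero_mul, zero_add, htX, hBZ, hBW, hsZ, hsW, fromBlocks_inj,
    true_and] at hXE ⊢
  obtain ⟨hB, hT⟩ := hXE
  refine ⟨?_, hT.symm⟩
  have hBY : BY * (1 - D) * sW = 0 := by
    rw [Matrix.mul_assoc, Matrix.sub_mul, Matrix.one_mul, hDsW, sub_self, Matrix.mul_zero]
  rw [Matrix.add_mul, hBY, zero_add, add_assoc, ← hB, Matrix.mul_sub, Matrix.mul_one,
    sub_add_cancel]

end Matrix

open Matrix

theorem stmt18_general (k m : ℕ)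
    (BX BY BZ BW : Matrix (Fin k) (Fin m) ℂ)
    (d tX tY sZ sW : Fin m → ℂ)
    (hd : ∀ i, d i = 0 ∨ d i = 1)
    (htX : ∀ i, tX i = 0 ↔ d i = 0)
    (htY : ∀ i, tY i = 0 ↔ d i = 0)
    (hBZ : BZ * Matrix.diagonal d = BZ)
    (hsZ0 : ∀ i, d i = 0 → sZ i = 0)
    (hBW : BW * Matrix.diagonal d = BW)
    (hsW0 : ∀ i, d i = 0 → sW i = 0)
    (hXE : (Matrix.fromBlocks 1 BX 0 (Matrix.diagonal tX) :
        Matrix (Fin k ⊕ Fin m) (Fin k ⊕ Fin m) ℂ) *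
          Matrix.fromBlocks 1 0 0 (Matrix.diagonal d) =
        Matrix.fromBlocks 1 BZ 0 (Matrix.diagonal sZ) *
          Matrix.fromBlocks 1 BW 0 (Matrix.diagonal sW))
    (hYE : (Matrix.fromBlocks 1 BY 0 (Matrix.diagonal tY) :
        Matrix (Fin k ⊕ Fin m) (Fin k ⊕ Fin m) ℂ) *
          Matrix.fromBlocks 1 0 0 (Matrix.diagonal d) =
        Matrix.fromBlocks 1 BW 0 (Matrix.diagonal sW) *
          Matrix.fromBlocks 1 BZ 0 (Matrix.diagonal sZ)) :
    (Matrix.fromBlocks 1 BZ 0 (Matrix.diagonal sZ) *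
        Matrix.fromBlocks 1 (BY * (1 - Matrix.diagonal d)) 0 (Matrix.diagonal d) :
          Matrix (Fin k ⊕ Fin m) (Fin k ⊕ Fin m) ℂ) *
      (Matrix.fromBlocks 1 BW 0 (Matrix.diagonal sW) *
        Matrix.fromBlocks 1 (BX * (1 - Matrix.diagonal d)) 0 (Matrix.diagonal d)) =
      Matrix.fromBlocks 1 BX 0 (Matrix.diagonal tX) ∧
    (Matrix.fromBlocks 1 BW 0 (Matrix.diagonal sW) *
        Matrix.fromBlocks 1 (BX * (1 - Matrix.diagonal d)) 0 (Matrix.diagonal d) :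
          Matrix (Fin k ⊕ Fin m) (Fin k ⊕ Fin m) ℂ) *
      (Matrix.fromBlocks 1 BZ 0 (Matrix.diagonal sZ) *
        Matrix.fromBlocks 1 (BY * (1 - Matrix.diagonal d)) 0 (Matrix.diagonal d)) =
      Matrix.fromBlocks 1 BY 0 (Matrix.diagonal tY) := by
  obtain ⟨hZD, hDZ⟩ := diagonal_mul_diagonal_of_support hd hsZ0
  obtain ⟨hWD, hDW⟩ := diagonal_mul_diagonal_of_support hd hsW0
  have hXD := (diagonal_mul_diagonal_of_support hd fun i => (htX i).2).1
  have hYD := (diagonal_mul_diagonal_of_support hd fun i => (htY i).2).1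
  exact ⟨fromBlocks_lift_factorization BX BY BZ BW _ _ _ _ hBZ hBW hZD hWD hDW hXD hXE,
    fromBlocks_lift_factorization BY BX BW BZ _ _ _ _ hBW hBZ hWD hZD hDZ hYD hYE⟩

/-- Let `X = [[1, B_X],[0, T_X]]` and `Y = [[1, B_Y],[0, T_Y]]` be
elements of the block monoid whose diagonal blocks have the same support as the
diagonal idempotent `D = diagonal d`.  If `Z, W` belong to the unit group
`H = E G E` of `E = [[1, 0],[0, D]]` and satisfy `X E = Z W` and `Y E = W Z`,
then `Z' = Z (Y Y⁻¹)` and `W' = W (X X⁻¹)` satisfy `X = Z' W'` and `Y = W' Z'`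
(where `X X⁻¹ = [[1, B_X (1 - D)],[0, D]]` and `Y Y⁻¹ = [[1, B_Y (1 - D)],[0, D]]`). -/
theorem stmt18 (k m : ℕ)
    (BX BY BZ BW : Matrix (Fin k) (Fin m) ℂ)
    (d tX tY sZ sW : Fin m → ℂ)
    (hd : ∀ i, d i = 0 ∨ d i = 1)
    (htX : ∀ i, tX i = 0 ↔ d i = 0)
    (htY : ∀ i, tY i = 0 ↔ d i = 0)
    (hBZ : BZ * Matrix.diagonal d = BZ)
    (hsZ1 : ∀ i, d i = 1 → sZ i ≠ 0) (hsZ0 : ∀ i, d i = 0 → sZ i = 0)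
    (hBW : BW * Matrix.diagonal d = BW)
    (hsW1 : ∀ i, d i = 1 → sW i ≠ 0) (hsW0 : ∀ i, d i = 0 → sW i = 0)
    (hXE : (Matrix.fromBlocks 1 BX 0 (Matrix.diagonal tX) :
        Matrix (Fin k ⊕ Fin m) (Fin k ⊕ Fin m) ℂ) *
          Matrix.fromBlocks 1 0 0 (Matrix.diagonal d) =
        Matrix.fromBlocks 1 BZ 0 (Matrix.diagonal sZ) *
          Matrix.fromBlocks 1 BW 0 (Matrix.diagonal sW))
    (hYE : (Matrix.fromBlocks 1 BY 0 (Matrix.diagonal tY) :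
        Matrix (Fin k ⊕ Fin m) (Fin k ⊕ Fin m) ℂ) *
          Matrix.fromBlocks 1 0 0 (Matrix.diagonal d) =
        Matrix.fromBlocks 1 BW 0 (Matrix.diagonal sW) *
          Matrix.fromBlocks 1 BZ 0 (Matrix.diagonal sZ)) :
    (Matrix.fromBlocks 1 BZ 0 (Matrix.diagonal sZ) *
        Matrix.fromBlocks 1 (BY * (1 - Matrix.diagonal d)) 0 (Matrix.diagonal d) :
          Matrix (Fin k ⊕ Fin m) (Fin k ⊕ Fin m) ℂ) *
      (Matrix.fromBlocks 1 BW 0 (Matrix.diagonal sW) *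
        Matrix.fromBlocks 1 (BX * (1 - Matrix.diagonal d)) 0 (Matrix.diagonal d)) =
      Matrix.fromBlocks 1 BX 0 (Matrix.diagonal tX) ∧
    (Matrix.fromBlocks 1 BW 0 (Matrix.diagonal sW) *
        Matrix.fromBlocks 1 (BX * (1 - Matrix.diagonal d)) 0 (Matrix.diagonal d) :
          Matrix (Fin k ⊕ Fin m) (Fin k ⊕ Fin m) ℂ) *
      (Matrix.fromBlocks 1 BZ 0 (Matrix.diagonal sZ) *
        Matrix.fromBlocks 1 (BY * (1 - Matrix.diagonal d)) 0 (Matrix.diagonal d)) =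
      Matrix.fromBlocks 1 BY 0 (Matrix.diagonal tY) :=
  stmt18_general k m BX BY BZ BW d tX tY sZ sW hd htX htY hBZ hsZ0 hBW hsW0 hXE hYE
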